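/- arXiv:1908.00562 — 6 statements merged into one kernel-verified Lean document; each statement's English description precedes it below -/
import Mathlib

section
/- Let ω be a tracial linear functional on a subalgebra D of a complex *-algebra C, and τ a tracial state on C. Suppose (A, B) is a cyclically monotone pair, i.e., for all a_1,...,a_n ∈ A and b_1,...,b_n ∈ B one has ω(a_1 b_1 a_2 b_2 ⋯ a_n b_n) = ω(a_1 a_2 ⋯ a_n) τ(b_1) τ(b_2) ⋯ τ(b_n). Then for n×n matrices A_p = (a_{ij}^{(p)}) with entries in A and B_q = (b_{ij}^{(q)}) with entries in B (p,q = 1,...,k), one has (Tr_n ⊗ ω)(A_1 B_1 A_2 B_2 ⋯ A_k B_k) = (Tr_n ⊗ ω)(A_1 B_1′ A_2 B_2′ ⋯ A_k B_k′), where B_p′ = (τ(b_{ij}^{(p)}))_{i,j} is the entrywise application of τ, viewed as a scalar matrix. -/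
/-- Cyclic monotone independence of a pair of sets `SA`, `SB` with respect to `(ω, τ)`:
for all `a₁,…,aₙ ∈ SA`, `b₁,…,bₙ ∈ SB`,
`ω (a₁ b₁ ⋯ aₙ bₙ) = ω (a₁ ⋯ aₙ) τ(b₁) ⋯ τ(bₙ)`. -/
def CyclicMonotone {C : Type*} [Ring C] [Algebra ℂ C]
    (ω τ : C →ₗ[ℂ] ℂ) (SA SB : Set C) : Prop :=
  ∀ (xs ys : List C), xs.length = ys.length →
    (∀ x ∈ xs, x ∈ SA) → (∀ y ∈ ys, y ∈ SB) →
    ω (List.zipWith (· * ·) xs ys).prod = ω xs.prod * (ys.map τ).prod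

lemma cm_key {C : Type*} [Ring C] [Algebra ℂ C]
    (ω τ : C →ₗ[ℂ] ℂ) (SA SB : Set C)
    (hcm : CyclicMonotone ω τ SA SB) (n : ℕ) :
    ∀ (L : List (Matrix (Fin n) (Fin n) C × Matrix (Fin n) (Fin n) C)),
      (∀ P ∈ L, (∀ i j, P.1 i j ∈ SA) ∧ (∀ i j, P.2 i j ∈ SB)) →
      ∀ (as bs : List C), as.length = bs.length →
        (∀ x ∈ as, x ∈ SA) → (∀ y ∈ bs, y ∈ SB) →
        ∀ i j : Fin n,
        ω ((List.zipWith (· * ·) as bs).prod * (L.map fun P => P.1 * P.2).prod i j)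
          = ω (as.prod *
              (L.map fun P => P.1 * P.2.map fun x => algebraMap ℂ C (τ x)).prod i j)
            * (bs.map τ).prod := by
  intro L
  induction L with
  | nil =>
    intro _ as bs hlen ha hb i j
    simp only [List.map_nil, List.prod_nil, Matrix.one_apply]
    by_cases h : i = j
    · simp only [h, if_true, mul_one]
      exact hcm as bs hlen ha hb
    · simp [h]
  | cons P L ih =>
    intro hmem as bs hlen ha hb i j
    obtain ⟨A, B⟩ := P
    have hA : ∀ i j, A i j ∈ SA := (hmem _ List.mem_cons_self).1
    have hB : ∀ i j, B i j ∈ SB := (hmem _ List.mem_cons_self).2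
    have hmem' : ∀ Q ∈ L, (∀ i j, Q.1 i j ∈ SA) ∧ (∀ i j, Q.2 i j ∈ SB) :=
      fun Q hQ => hmem Q (List.mem_cons_of_mem _ hQ)
    set ML := (L.map fun P => P.1 * P.2).prod with hML
    set ML' := (L.map fun P => P.1 * P.2.map fun x => algebraMap ℂ C (τ x)).prod with hML'
    have key1 : ∀ (p q : Fin n),
        ω ((List.zipWith (· * ·) as bs).prod * (A i p * B p q * ML q j))
          = ω (as.prod * A i p * ML' q j) * ((bs.map τ).prod * τ (B p q)) := by
      intro p q
      have h1 : (List.zipWith (· * ·) as bs).prod * (A i p * B p q * ML q j)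
          = (List.zipWith (· * ·) (as ++ [A i p]) (bs ++ [B p q])).prod * ML q j := by
        rw [List.zipWith_append hlen]
        simp [mul_assoc]
      rw [h1, ih hmem' _ _ (by simp [hlen])
        (by simp only [List.mem_append, List.mem_singleton]
            rintro x (hx | rfl); exacts [ha x hx, hA i p])
        (by simp only [List.mem_append, List.mem_singleton]
            rintro y (hy | rfl); exacts [hb y hy, hB p q]) q j]
      simp [mul_assoc]
    have lhsexp : ((A * B) * ML) i j = ∑ q, ∑ p, A i p * B p q * ML q j := by
      simp [Matrix.mul_apply, Finset.sum_mul]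
    have rhsexp : ((A * B.map fun x => algebraMap ℂ C (τ x)) * ML') i j
        = ∑ q, ∑ p, τ (B p q) • (A i p * ML' q j) := by
      simp only [Matrix.mul_apply, Matrix.map_apply, Finset.sum_mul]
      congr 1; ext q; congr 1; ext p
      rw [mul_assoc, Algebra.smul_def, ← mul_assoc, ← mul_assoc,
        ← Algebra.commutes (τ (B p q)) (A i p)]
    simp only [List.map_cons, List.prod_cons]
    rw [lhsexp, rhsexp]
    simp only [Finset.mul_sum, map_sum, Finset.sum_mul, map_smul, smul_eq_mul]
    refine Finset.sum_congr rfl fun q _ => Finset.sum_congr rfl fun p _ => ?_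
    rw [key1 p q, mul_smul_comm, map_smul, smul_eq_mul, ← mul_assoc (as.prod)]
    ring

theorem stmt_0 {C : Type*} [Ring C] [Algebra ℂ C] [StarRing C] [StarModule ℂ C]
    (ω τ : C →ₗ[ℂ] ℂ)
    (hτ1 : τ 1 = 1) (hτtr : ∀ x y : C, τ (x * y) = τ (y * x))
    (hωtr : ∀ x y : C, ω (x * y) = ω (y * x))
    (SA SB : Set C) (h1B : (1 : C) ∈ SB)
    (hcm : CyclicMonotone ω τ SA SB)
    (n k : ℕ)
    (A : Fin k → Matrix (Fin n) (Fin n) C) (B : Fin k → Matrix (Fin n) (Fin n) C)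
    (hA : ∀ p i j, A p i j ∈ SA) (hB : ∀ p i j, B p i j ∈ SB) :
    ω (Matrix.trace (List.ofFn fun p => A p * B p).prod) =
      ω (Matrix.trace
        (List.ofFn fun p => A p * (B p).map (fun x => algebraMap ℂ C (τ x))).prod) := by
  have h := cm_key ω τ SA SB hcm n (List.ofFn fun p => (A p, B p))
    (by
      intro P hP
      rw [List.mem_ofFn] at hP
      obtain ⟨p, rfl⟩ := hP
      exact ⟨hA p, hB p⟩)
    [] [] rfl (by simp) (by simp)
  have hmap1 : (List.ofFn fun p => (A p, B p)).map (fun P => P.1 * P.2)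
      = List.ofFn fun p => A p * B p := by
    rw [List.map_ofFn]; rfl
  have hmap2 : (List.ofFn fun p => (A p, B p)).map
        (fun P => P.1 * P.2.map fun x => algebraMap ℂ C (τ x))
      = List.ofFn fun p => A p * (B p).map (fun x => algebraMap ℂ C (τ x)) := by
    rw [List.map_ofFn]; rfl
  rw [hmap1, hmap2] at h
  simp only [List.zipWith_nil_left, List.prod_nil, one_mul, List.map_nil, mul_one] at h
  simp only [Matrix.trace, Matrix.diag, map_sum]
  exact Finset.sum_congr rfl fun i _ => h i i
end

section
/- With the same hypotheses as the matrix replacement identity for cyclically monotone pairs (entries of A_p in A trace-class side, entries of B_q in B, (A,B) cyclically monotone with respect to (ω,τ)), for every m ≥ 1 one has (Tr_n ⊗ ω)((A_1 B_1 ⋯ A_k B_k)^m) = (Tr_n ⊗ ω)((A_1 B_1′ ⋯ A_k B_k′)^m), where B_p′ = (τ(b_{ij}^{(p)}))_{i,j}. That is, all moments of A_1 B_1 ⋯ A_k B_k and of A_1 B_1′ ⋯ A_k B_k′ with respect to Tr_n ⊗ ω agree. -/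
private lemma zipProd_snoc {C : Type*} [Ring C] (f : C → C → C) (xs ys : List C)
    (h : xs.length = ys.length) (a b : C) :
    (List.zipWith f (xs ++ [a]) (ys ++ [b])).prod
      = (List.zipWith f xs ys).prod * f a b := by
  rw [List.zipWith_append h]
  simp

private lemma scalarProd {C : Type*} [Ring C] [Algebra ℂ C] (τ : C →ₗ[ℂ] ℂ) :
    ∀ (xs ys : List C), xs.length = ys.length →
      (List.zipWith (fun a b => a * algebraMap ℂ C (τ b)) xs ys).prod
        = (ys.map τ).prod • xs.prod := by
  intro xs
  induction xs with
  | nil => intro ys h; cases ys <;> simp_all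
  | cons a xs ih =>
    intro ys h
    cases ys with
    | nil => simp at h
    | cons b ys =>
      simp only [List.length_cons, Nat.succ.injEq] at h
      simp only [List.zipWith_cons_cons, List.prod_cons, List.map_cons, ih ys h]
      simp only [Algebra.algebraMap_eq_smul_one, mul_smul_comm, smul_mul_assoc, smul_smul,
        mul_one]
      rw [mul_comm]

private lemma accum {C : Type*} [Ring C] [Algebra ℂ C]
    (ω τ : C →ₗ[ℂ] ℂ) (SA SB : Set C) (hcm : CyclicMonotone ω τ SA SB) (n : ℕ)
    (L : List (Matrix (Fin n) (Fin n) C × Matrix (Fin n) (Fin n) C)) :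
    (∀ q ∈ L, (∀ i j, q.1 i j ∈ SA) ∧ (∀ i j, q.2 i j ∈ SB)) →
    ∀ (xs ys : List C), xs.length = ys.length →
      (∀ x ∈ xs, x ∈ SA) → (∀ y ∈ ys, y ∈ SB) → ∀ i j : Fin n,
      ω ((List.zipWith (· * ·) xs ys).prod * ((List.map (fun q : Matrix (Fin n) (Fin n) C × Matrix (Fin n) (Fin n) C => q.1 * q.2) L).prod) i j)
        = ω ((List.zipWith (fun a b => a * algebraMap ℂ C (τ b)) xs ys).prod
            * ((List.map (fun q : Matrix (Fin n) (Fin n) C × Matrix (Fin n) (Fin n) C => q.1 * q.2.map (fun x => algebraMap ℂ C (τ x))) L).prod) i j) := by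
  induction L with
  | nil =>
    intro _ xs ys hlen hxs hys i j
    simp only [List.map_nil, List.prod_nil, Matrix.one_apply]
    by_cases hij : i = j
    · simp only [hij, if_true, mul_one]
      rw [hcm xs ys hlen hxs hys, scalarProd τ xs ys hlen, map_smul, smul_eq_mul, mul_comm]
    · simp [hij]
  | cons q L ih =>
    intro hL xs ys hlen hxs hys i j
    have hA : ∀ i j, q.1 i j ∈ SA := (hL q List.mem_cons_self).1
    have hB : ∀ i j, q.2 i j ∈ SB := (hL q List.mem_cons_self).2
    have hL' : ∀ p ∈ L, (∀ i j, p.1 i j ∈ SA) ∧ (∀ i j, p.2 i j ∈ SB) :=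
      fun p hp => hL p (List.mem_cons_of_mem _ hp)
    simp only [List.map_cons, List.prod_cons, Matrix.mul_apply, Matrix.map_apply,
      Finset.sum_mul, Finset.mul_sum, map_sum]
    refine Finset.sum_congr rfl fun l _ => Finset.sum_congr rfl fun t _ => ?_
    have hxs' : ∀ x ∈ xs ++ [q.1 i t], x ∈ SA := by
      intro x hx
      rcases List.mem_append.mp hx with h | h
      · exact hxs x h
      · rw [List.mem_singleton.mp h]; exact hA i t
    have hys' : ∀ y ∈ ys ++ [q.2 t l], y ∈ SB := by
      intro y hy
      rcases List.mem_append.mp hy with h | h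
      · exact hys y h
      · rw [List.mem_singleton.mp h]; exact hB t l
    have hlen' : (xs ++ [q.1 i t]).length = (ys ++ [q.2 t l]).length := by
      simp [hlen]
    have key := ih hL' (xs ++ [q.1 i t]) (ys ++ [q.2 t l]) hlen' hxs' hys' l j
    rw [zipProd_snoc _ xs ys hlen, zipProd_snoc _ xs ys hlen] at key
    calc ω ((List.zipWith (· * ·) xs ys).prod
            * (q.1 i t * q.2 t l * ((List.map (fun q : Matrix (Fin n) (Fin n) C × Matrix (Fin n) (Fin n) C => q.1 * q.2) L).prod) l j))
        = ω ((List.zipWith (· * ·) xs ys).prod * (q.1 i t * q.2 t l)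
            * ((List.map (fun q : Matrix (Fin n) (Fin n) C × Matrix (Fin n) (Fin n) C => q.1 * q.2) L).prod) l j) := by simp only [mul_assoc]
      _ = ω ((List.zipWith (fun a b => a * algebraMap ℂ C (τ b)) xs ys).prod
            * (q.1 i t * algebraMap ℂ C (τ (q.2 t l)))
            * ((List.map (fun q : Matrix (Fin n) (Fin n) C × Matrix (Fin n) (Fin n) C => q.1 * q.2.map (fun x => algebraMap ℂ C (τ x))) L).prod) l j) := key
      _ = _ := by simp only [mul_assoc]

private lemma key_lemma {C : Type*} [Ring C] [Algebra ℂ C]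
    (ω τ : C →ₗ[ℂ] ℂ) (SA SB : Set C) (hcm : CyclicMonotone ω τ SA SB) (n : ℕ)
    (L : List (Matrix (Fin n) (Fin n) C × Matrix (Fin n) (Fin n) C))
    (hL : ∀ q ∈ L, (∀ i j, q.1 i j ∈ SA) ∧ (∀ i j, q.2 i j ∈ SB)) :
    ω (Matrix.trace ((List.map (fun q : Matrix (Fin n) (Fin n) C × Matrix (Fin n) (Fin n) C => q.1 * q.2) L).prod))
      = ω (Matrix.trace ((List.map (fun q : Matrix (Fin n) (Fin n) C × Matrix (Fin n) (Fin n) C => q.1 * q.2.map (fun x => algebraMap ℂ C (τ x))) L).prod)) := by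
  simp only [Matrix.trace, Matrix.diag, map_sum]
  refine Finset.sum_congr rfl fun i _ => ?_
  simpa using accum ω τ SA SB hcm n L hL [] [] rfl (by simp) (by simp) i i

theorem stmt_1 {C : Type*} [Ring C] [Algebra ℂ C] [StarRing C] [StarModule ℂ C]
    (ω τ : C →ₗ[ℂ] ℂ)
    (hτ1 : τ 1 = 1) (hτtr : ∀ x y : C, τ (x * y) = τ (y * x))
    (hωtr : ∀ x y : C, ω (x * y) = ω (y * x))
    (SA SB : Set C) (h1B : (1 : C) ∈ SB)
    (hcm : CyclicMonotone ω τ SA SB)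
    (n k : ℕ)
    (A : Fin k → Matrix (Fin n) (Fin n) C) (B : Fin k → Matrix (Fin n) (Fin n) C)
    (hA : ∀ p i j, A p i j ∈ SA) (hB : ∀ p i j, B p i j ∈ SB) :
    ∀ m : ℕ, 1 ≤ m →
      ω (Matrix.trace ((List.ofFn fun p => A p * B p).prod ^ m)) =
        ω (Matrix.trace
          ((List.ofFn fun p => A p * (B p).map (fun x => algebraMap ℂ C (τ x))).prod ^ m)) := by
  intro m _
  set L : List (Matrix (Fin n) (Fin n) C × Matrix (Fin n) (Fin n) C) :=
    List.ofFn (fun p => (A p, B p)) with hLdef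
  set Lm := (List.replicate m L).flatten with hLm
  have hpow : ∀ f : Matrix (Fin n) (Fin n) C × Matrix (Fin n) (Fin n) C → Matrix (Fin n) (Fin n) C,
      (List.map f Lm).prod = ((List.map f L).prod) ^ m := by
    intro f
    rw [hLm, List.map_flatten, List.map_replicate, List.prod_flatten, List.map_replicate,
      List.prod_replicate]
  have hmemL : ∀ q ∈ Lm, (∀ i j, q.1 i j ∈ SA) ∧ (∀ i j, q.2 i j ∈ SB) := by
    intro q hq
    rcases List.mem_flatten.mp hq with ⟨l, hl, hql⟩
    rw [List.eq_of_mem_replicate hl] at hql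
    rw [hLdef] at hql
    rcases List.mem_ofFn.mp hql with ⟨p, hp⟩
    rw [← hp]
    exact ⟨hA p, hB p⟩
  have h1 : (List.ofFn fun p => A p * B p) = List.map (fun q : Matrix (Fin n) (Fin n) C × Matrix (Fin n) (Fin n) C => q.1 * q.2) L := by
    rw [hLdef, List.map_ofFn]; rfl
  have h2 : (List.ofFn fun p => A p * (B p).map (fun x => algebraMap ℂ C (τ x)))
      = List.map (fun q : Matrix (Fin n) (Fin n) C × Matrix (Fin n) (Fin n) C => q.1 * q.2.map (fun x => algebraMap ℂ C (τ x))) L := by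
    rw [hLdef, List.map_ofFn]; rfl
  rw [h1, h2, ← hpow, ← hpow]
  exact key_lemma ω τ SA SB hcm n Lm hmemL
end

section
/- Let (A, B) be a cyclically monotone pair with respect to (ω, τ), with a, a_1, ..., a_k ∈ A and b, b_1, ..., b_k ∈ B. If b_1, ..., b_k are selfadjoint, then for every m ≥ 1, ω((∑_{i=1}^k a_i b_i a_i^*)^m) = ω((∑_{i=1}^k τ(b_i) a_i a_i^*)^m). -/
/-!
Expanding `(∑ i, a i b i a i*)^m` gives a sum of words `a_{i₁} b_{i₁} a_{i₁}* ⋯ a_{iₘ} b_{iₘ} a_{iₘ}*`.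
Padding each `a_i*` with the unit `1 ∈ B`, such a word alternates between `A` and `B`, so cyclic
monotonicity evaluates it as `τ(b_{i₁}) ⋯ τ(b_{iₘ}) ω(a_{i₁} a_{i₁}* ⋯ a_{iₘ} a_{iₘ}*)`, which is
exactly the corresponding term of the expansion of `(∑ i, τ(b i) a i a i*)^m`.
-/

section WordExpansion

variable {ι R C : Type*} [Fintype ι] [CommSemiring R] [Semiring C] [Algebra R C]

theorem map_prod_mul_sum_pow_eq (φ : C →ₗ[R] R) (f g : ι → C) (c : ι → R)
    (h : ∀ l : List ι, φ (l.map f).prod = (l.map c).prod * φ (l.map g).prod) (m : ℕ)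
    (l : List ι) :
    φ ((l.map f).prod * (∑ i, f i) ^ m) =
      (l.map c).prod * φ ((l.map g).prod * (∑ i, c i • g i) ^ m) := by
  induction m generalizing l with
  | zero => simpa using h l
  | succ m ih =>
    simp only [pow_succ', Finset.sum_mul, Finset.mul_sum, ← mul_assoc, smul_mul_assoc,
      mul_smul_comm, map_sum, map_smul, smul_eq_mul]
    refine Finset.sum_congr rfl fun i _ => ?_
    simpa only [List.map_append, List.map_cons, List.map_nil, List.prod_append, List.prod_cons,
      List.prod_nil, mul_one, mul_assoc] using ih (l ++ [i])

theorem map_sum_pow_eq (φ : C →ₗ[R] R) (f g : ι → C) (c : ι → R)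
    (h : ∀ l : List ι, φ (l.map f).prod = (l.map c).prod * φ (l.map g).prod) (m : ℕ) :
    φ ((∑ i, f i) ^ m) = φ ((∑ i, c i • g i) ^ m) := by
  simpa using map_prod_mul_sum_pow_eq φ f g c h m []

end WordExpansion

namespace CyclicMonotone

variable {ι C : Type*} [Ring C] [Algebra ℂ C]

theorem apply_prod_map_mul_mul {ω τ : C →ₗ[ℂ] ℂ} {SA SB : Set C}
    (hcm : CyclicMonotone ω τ SA SB) (hτ1 : τ 1 = 1) (h1B : (1 : C) ∈ SB)
    (x x' y : ι → C) (hx : ∀ i, x i ∈ SA) (hx' : ∀ i, x' i ∈ SA) (hy : ∀ i, y i ∈ SB)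
    (l : List ι) :
    ω (l.map fun i => x i * y i * x' i).prod =
      (l.map fun i => τ (y i)).prod * ω (l.map fun i => x i * x' i).prod := by
  have hword : ∀ l : List ι, (List.zipWith (· * ·) (l.flatMap fun i => [x i, x' i])
      (l.flatMap fun i => [y i, 1])).prod = (l.map fun i => x i * y i * x' i).prod := by
    intro l; induction l <;> simp_all [mul_assoc]
  have hxs : ∀ l : List ι,
      (l.flatMap fun i => [x i, x' i]).prod = (l.map fun i => x i * x' i).prod := by
    intro l; induction l <;> simp_all [mul_assoc]
  have hys : ∀ l : List ι,
      ((l.flatMap fun i => [y i, 1]).map τ).prod = (l.map fun i => τ (y i)).prod := by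
    intro l; induction l <;> simp_all
  have hxsA : ∀ z ∈ l.flatMap fun i => [x i, x' i], z ∈ SA := by
    simp only [List.mem_flatMap, List.mem_cons, List.not_mem_nil, or_false]
    rintro z ⟨i, -, rfl | rfl⟩
    exacts [hx i, hx' i]
  have hysB : ∀ z ∈ l.flatMap fun i => [y i, 1], z ∈ SB := by
    simp only [List.mem_flatMap, List.mem_cons, List.not_mem_nil, or_false]
    rintro z ⟨i, -, rfl | rfl⟩
    exacts [hy i, h1B]
  rw [← hword, hcm _ _ (by simp) hxsA hysB, hxs, hys, mul_comm]

end CyclicMonotone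

theorem stmt_2_general {C : Type*} [Ring C] [Algebra ℂ C] [StarRing C]
    (ω τ : C →ₗ[ℂ] ℂ)
    (hτ1 : τ 1 = 1)
    (SA SB : Set C) (h1B : (1 : C) ∈ SB)
    (hSAstar : ∀ x ∈ SA, star x ∈ SA)
    (hcm : CyclicMonotone ω τ SA SB)
    (k : ℕ) (a b : Fin k → C)
    (ha : ∀ i, a i ∈ SA) (hb : ∀ i, b i ∈ SB) :
    ∀ m : ℕ, 1 ≤ m →
      ω ((∑ i, a i * b i * star (a i)) ^ m) =
        ω ((∑ i, τ (b i) • (a i * star (a i))) ^ m) := fun m _ =>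
  map_sum_pow_eq ω _ _ _
    (hcm.apply_prod_map_mul_mul hτ1 h1B a (star ∘ a) b ha (fun i => hSAstar _ (ha i)) hb) m

theorem stmt_2 {C : Type*} [Ring C] [Algebra ℂ C] [StarRing C] [StarModule ℂ C]
    (ω τ : C →ₗ[ℂ] ℂ)
    (hτ1 : τ 1 = 1) (hτtr : ∀ x y : C, τ (x * y) = τ (y * x))
    (hωtr : ∀ x y : C, ω (x * y) = ω (y * x))
    (hωsa : ∀ x : C, ω (star x) = starRingEnd ℂ (ω x))
    (SA SB : Set C) (h1B : (1 : C) ∈ SB)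
    (hSAstar : ∀ x ∈ SA, star x ∈ SA) (hSBstar : ∀ y ∈ SB, star y ∈ SB)
    (hcm : CyclicMonotone ω τ SA SB)
    (k : ℕ) (a b : Fin k → C)
    (ha : ∀ i, a i ∈ SA) (hb : ∀ i, b i ∈ SB)
    (hbsa : ∀ i, star (b i) = b i) :
    ∀ m : ℕ, 1 ≤ m →
      ω ((∑ i, a i * b i * star (a i)) ^ m) =
        ω ((∑ i, τ (b i) • (a i * star (a i))) ^ m) :=
  stmt_2_general ω τ hτ1 SA SB h1B hSAstar hcm k a b ha hb
end

section
/- Let (A, B) be a cyclically monotone pair with respect to (ω, τ) with a, c, a_1, ..., a_k ∈ A and b, b_1, ..., b_k ∈ B. Then ω((abc) b a_1 b_1 ⋯ a_k b_k) = ω((τ(b)·ac) b a_1 b_1 ⋯ a_k b_k). More generally, replacing any occurrence of the element abc by τ(b)ac inside an alternating word does not change the value of ω. -/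
theorem List.zipWith_ofFn {α β γ : Type*} (f : α → β → γ) {k : ℕ} (a : Fin k → α)
    (b : Fin k → β) :
    List.zipWith f (List.ofFn a) (List.ofFn b) = List.ofFn fun i => f (a i) (b i) :=
  List.ext_getElem (by simp) fun _ _ _ => by simp

namespace CyclicMonotone

variable {C : Type*} [Ring C] [Algebra ℂ C] {ω τ : C →ₗ[ℂ] ℂ} {SA SB : Set C}

theorem apply_mul_mul_mul_eq_apply_smul_mul (hcm : CyclicMonotone ω τ SA SB) (hτ1 : τ 1 = 1)
    (h1B : (1 : C) ∈ SB) {a b c y : C} (ha : a ∈ SA) (hb : b ∈ SB) (hc : c ∈ SA) (hy : y ∈ SB)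
    {xs ys : List C} (hlen : xs.length = ys.length) (hxs : ∀ x ∈ xs, x ∈ SA)
    (hys : ∀ y ∈ ys, y ∈ SB) :
    ω (a * b * c * y * (List.zipWith (· * ·) xs ys).prod) =
      ω (τ b • (a * c) * y * (List.zipWith (· * ·) xs ys).prod) := by
  set w := (List.zipWith (· * ·) xs ys).prod
  have key : ∀ z ∈ SB, ω (a * z * (c * y * w)) =
      ω (a * (c * xs.prod)) * (τ z * (τ y * (ys.map τ).prod)) := fun z hz => by
    simpa using hcm (a :: c :: xs) (z :: y :: ys) (by simp [hlen])
      (by simpa [ha, hc] using hxs) (by simpa [hz, hy] using hys)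
  calc ω (a * b * c * y * w) = ω (a * b * (c * y * w)) := by simp only [mul_assoc]
    _ = τ b * ω (a * 1 * (c * y * w)) := by rw [key b hb, key 1 h1B, hτ1]; ring
    _ = ω (τ b • (a * c) * y * w) := by simp only [smul_mul_assoc, map_smul, mul_one, mul_assoc,
      smul_eq_mul]

end CyclicMonotone

theorem stmt_7_general {C : Type*} [Ring C] [Algebra ℂ C]
    (ω τ : C →ₗ[ℂ] ℂ)
    (hτ1 : τ 1 = 1)
    (SA SB : Set C) (h1B : (1 : C) ∈ SB)
    (hcm : CyclicMonotone ω τ SA SB)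
    (a c : C) (b : C) (ha : a ∈ SA) (hc : c ∈ SA) (hb : b ∈ SB)
    (k : ℕ) (a' b' : Fin k → C) (ha' : ∀ i, a' i ∈ SA) (hb' : ∀ i, b' i ∈ SB) :
    ω ((a * b * c) * b * (List.ofFn fun i => a' i * b' i).prod) =
      ω ((τ b • (a * c)) * b * (List.ofFn fun i => a' i * b' i).prod) := by
  rw [← List.zipWith_ofFn (· * ·) a' b']
  exact hcm.apply_mul_mul_mul_eq_apply_smul_mul hτ1 h1B ha hb hc hb (by simp)
    (by simpa [List.mem_ofFn] using ha') (by simpa [List.mem_ofFn] using hb')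

theorem stmt_7 {C : Type*} [Ring C] [Algebra ℂ C] [StarRing C] [StarModule ℂ C]
    (ω τ : C →ₗ[ℂ] ℂ)
    (hτ1 : τ 1 = 1) (hτtr : ∀ x y : C, τ (x * y) = τ (y * x))
    (hωtr : ∀ x y : C, ω (x * y) = ω (y * x))
    (SA SB : Set C) (h1B : (1 : C) ∈ SB)
    (hcm : CyclicMonotone ω τ SA SB)
    (a c : C) (b : C) (ha : a ∈ SA) (hc : c ∈ SA) (hb : b ∈ SB)
    (k : ℕ) (a' b' : Fin k → C) (ha' : ∀ i, a' i ∈ SA) (hb' : ∀ i, b' i ∈ SB) :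
    ω ((a * b * c) * b * (List.ofFn fun i => a' i * b' i).prod) =
      ω ((τ b • (a * c)) * b * (List.ofFn fun i => a' i * b' i).prod) :=
  stmt_7_general ω τ hτ1 SA SB h1B hcm a c b ha hc hb k a' b' ha' hb'
end

section
/- Let (A, B) be a cyclically monotone pair with respect to (ω, τ) with a, c, a_1, ..., a_k ∈ A and b ∈ B. Then the pair (alg(abc, a_1, ..., a_k), B) is cyclically monotone with respect to (ω, τ); in particular ω((abc) a_1 ⋯ a_k) = τ(b) ω(a c a_1 ⋯ a_k). -/
set_option linter.unusedSectionVars false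

namespace CMaux

variable {C : Type*} [Ring C] [Algebra ℂ C] {k : ℕ}

/-- Tagged generators: `none ↦ a * b * c`, `some i ↦ a' i`. -/
def gen (a b c : C) (a' : Fin k → C) : Option (Fin k) → C
  | none => a * b * c
  | some i => a' i

def strp (a c : C) (a' : Fin k → C) : Option (Fin k) → C
  | none => a * c
  | some i => a' i

def fB (τ : C →ₗ[ℂ] ℂ) (b : C) : Option (Fin k) → ℂ
  | none => τ b
  | some _ => 1

def Xw (a c : C) (a' : Fin k → C) : List (Option (Fin k)) → List C
  | [] => []
  | none :: w => a :: c :: Xw a c a' w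
  | some i :: w => a' i :: Xw a c a' w

def Yw (b : C) : List (Option (Fin k) × C) → List C
  | [] => []
  | (none, s) :: L => b :: s :: Yw b L
  | (some _, s) :: L => s :: Yw b L

def glue : List (Option (Fin k)) → C → List (Option (Fin k) × C)
  | [], _ => []
  | [t], y => [(t, y)]
  | t :: ts, y => (t, 1) :: glue ts y

def Lof : List (List (Option (Fin k))) → List C → List (Option (Fin k) × C)
  | w :: ws, y :: ys => glue w y ++ Lof ws ys
  | _, _ => []

def cat : List (List (Option (Fin k))) → List (Option (Fin k))
  | [] => []
  | w :: ws => w ++ cat ws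

lemma length_Xw_Yw (a c : C) (a' : Fin k → C) (b : C) :
    ∀ L : List (Option (Fin k) × C), (Xw a c a' (L.map Prod.fst)).length = (Yw b L).length := by
  intro L
  induction L with
  | nil => rfl
  | cons p L ih => rcases p with ⟨t | i, s⟩ <;> simp [Xw, Yw, ih]

lemma mem_Xw {SA : Set C} {a c : C} {a' : Fin k → C} (ha : a ∈ SA) (hc : c ∈ SA)
    (ha' : ∀ i, a' i ∈ SA) : ∀ w : List (Option (Fin k)), ∀ x ∈ Xw a c a' w, x ∈ SA := by
  intro w
  induction w with
  | nil => simp [Xw]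
  | cons t w ih =>
    rcases t with _ | i
    · simp only [Xw, List.mem_cons]
      rintro x (rfl | rfl | hx)
      exacts [ha, hc, ih x hx]
    · simp only [Xw, List.mem_cons]
      rintro x (rfl | hx)
      exacts [ha' i, ih x hx]
lemma mem_Yw {SB : Set C} {b : C} (hb : b ∈ SB) :
    ∀ L : List (Option (Fin k) × C), (∀ p ∈ L, p.2 ∈ SB) → ∀ v ∈ Yw b L, v ∈ SB := by
  intro L
  induction L with
  | nil => simp [Yw]
  | cons p L ih =>
    rcases p with ⟨t | i, s⟩
    · intro hL
      simp only [Yw, List.mem_cons]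
      rintro v (rfl | rfl | hv)
      · exact hb
      · exact hL (none, v) (by simp)
      · exact ih (fun q hq => hL q (by simp [hq])) v hv
    · intro hL
      simp only [Yw, List.mem_cons]
      rintro v (rfl | hv)
      · exact hL (some i, v) (by simp)
      · exact ih (fun q hq => hL q (by simp [hq])) v hv

lemma zip_Xw_Yw (a b c : C) (a' : Fin k → C) :
    ∀ L : List (Option (Fin k) × C),
      (List.zipWith (· * ·) (Xw a c a' (L.map Prod.fst)) (Yw b L)).prod
        = (L.map fun p => gen a b c a' p.1 * p.2).prod := by
  intro L
  induction L with
  | nil => rfl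
  | cons p L ih =>
    rcases p with ⟨t | i, s⟩ <;>
      simp [Xw, Yw, gen, ih, mul_assoc]

lemma prod_Xw (a c : C) (a' : Fin k → C) :
    ∀ w : List (Option (Fin k)), (Xw a c a' w).prod = (w.map (strp a c a')).prod := by
  intro w
  induction w with
  | nil => rfl
  | cons t w ih =>
    rcases t with _ | i <;> simp [Xw, strp, ih, mul_assoc]

lemma map_prod_Yw (τ : C →ₗ[ℂ] ℂ) (b : C) :
    ∀ L : List (Option (Fin k) × C),
      ((Yw b L).map τ).prod = (L.map fun p => fB τ b p.1 * τ p.2).prod := by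
  intro L
  induction L with
  | nil => rfl
  | cons p L ih =>
    rcases p with ⟨t | i, s⟩ <;> simp [Yw, fB, ih, mul_assoc]

lemma glue_map_fst : ∀ (w : List (Option (Fin k))) (y : C), (glue w y).map Prod.fst = w := by
  intro w
  induction w with
  | nil => intro y; rfl
  | cons t ts ih =>
    intro y
    cases ts with
    | nil => rfl
    | cons t2 ts2 => simp only [glue, List.map_cons, ih]

lemma glue_snd_mem {SB : Set C} (h1B : (1 : C) ∈ SB) :
    ∀ (w : List (Option (Fin k))) (y : C), y ∈ SB → ∀ p ∈ glue w y, p.2 ∈ SB := by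
  intro w
  induction w with
  | nil => simp [glue]
  | cons t ts ih =>
    intro y hy p hp
    cases ts with
    | nil =>
      simp only [glue, List.mem_singleton] at hp
      subst hp; exact hy
    | cons t2 ts2 =>
      simp only [glue, List.mem_cons] at hp
      rcases hp with rfl | hp
      · exact h1B
      · exact ih y hy p hp

lemma glue_map_prod {M : Type*} [Monoid M] (f : Option (Fin k) → M) (g : C → M)
    (hg : g 1 = 1) :
    ∀ (w : List (Option (Fin k))), w ≠ [] → ∀ y : C,
      ((glue w y).map fun p => f p.1 * g p.2).prod = (w.map f).prod * g y := by
  intro w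
  induction w with
  | nil => intro h; exact absurd rfl h
  | cons t ts ih =>
    intro _ y
    cases ts with
    | nil => simp [glue]
    | cons t2 ts2 =>
      simp only [glue, List.map_cons, List.prod_cons, ih (List.cons_ne_nil _ _) y, hg,
        mul_one, mul_assoc]
lemma Lof_map_fst : ∀ (ws : List (List (Option (Fin k)))) (ys : List C),
    ws.length = ys.length → (Lof ws ys).map Prod.fst = cat ws := by
  intro ws
  induction ws with
  | nil =>
    intro ys h
    cases ys with
    | nil => rfl
    | cons y ys => simp at h
  | cons w ws ih =>
    intro ys h
    cases ys with
    | nil => simp at h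
    | cons y ys =>
      simp only [List.length_cons, Nat.add_right_cancel_iff] at h
      simp only [Lof, cat, List.map_append, glue_map_fst, ih ys h]

lemma Lof_snd_mem {SB : Set C} (h1B : (1 : C) ∈ SB) :
    ∀ (ws : List (List (Option (Fin k)))) (ys : List C),
      (∀ y ∈ ys, y ∈ SB) → ∀ p ∈ Lof ws ys, p.2 ∈ SB := by
  intro ws
  induction ws with
  | nil => intro ys _ p hp; cases ys <;> simp [Lof] at hp
  | cons w ws ih =>
    intro ys hys p hp
    cases ys with
    | nil => simp [Lof] at hp
    | cons y ys =>
      simp only [Lof, List.mem_append] at hp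
      rcases hp with hp | hp
      · exact glue_snd_mem h1B w y (hys y (by simp)) p hp
      · exact ih ys (fun z hz => hys z (by simp [hz])) p hp

lemma Lof_prod (a b c : C) (a' : Fin k → C) :
    ∀ (ws : List (List (Option (Fin k)))) (ys : List C),
      ws.length = ys.length → (∀ w ∈ ws, w ≠ []) →
      ((Lof ws ys).map fun p => gen a b c a' p.1 * p.2).prod
        = (List.zipWith (fun w y => (w.map (gen a b c a')).prod * y) ws ys).prod := by
  intro ws
  induction ws with
  | nil =>
    intro ys h _
    cases ys with
    | nil => rfl
    | cons y ys => simp at h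
  | cons w ws ih =>
    intro ys h hne
    cases ys with
    | nil => simp at h
    | cons y ys =>
      simp only [List.length_cons, Nat.add_right_cancel_iff] at h
      have h1 := glue_map_prod (gen a b c a') (fun s : C => s) rfl w (hne w (by simp)) y
      simp only [Lof, List.map_append, List.prod_append, List.zipWith_cons_cons,
        List.prod_cons, h1, ih ys h (fun u hu => hne u (by simp [hu]))]

lemma Lof_fB (τ : C →ₗ[ℂ] ℂ) (b : C) (hτ1 : τ 1 = 1) :
    ∀ (ws : List (List (Option (Fin k)))) (ys : List C),
      ws.length = ys.length → (∀ w ∈ ws, w ≠ []) →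
      ((Lof ws ys).map fun p => fB τ b p.1 * τ p.2).prod
        = ((cat ws).map (fB τ b)).prod * (ys.map τ).prod := by
  intro ws
  induction ws with
  | nil =>
    intro ys h _
    cases ys with
    | nil => simp [Lof, cat]
    | cons y ys => simp at h
  | cons w ws ih =>
    intro ys h hne
    cases ys with
    | nil => simp at h
    | cons y ys =>
      simp only [List.length_cons, Nat.add_right_cancel_iff] at h
      have h1 := glue_map_prod (M := ℂ) (fB τ b) (fun s : C => τ s) hτ1 w (hne w (by simp)) y
      simp only [Lof, cat, List.map_append, List.prod_append, List.map_cons,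
        List.prod_cons, h1, ih ys h (fun u hu => hne u (by simp [hu]))]
      ring
lemma zip_ones {α : Type*} (f : α → C) :
    ∀ l : List α, List.zipWith (fun w y => f w * y) l (List.replicate l.length 1) = l.map f := by
  intro l
  induction l with
  | nil => rfl
  | cons x l ih => simp [List.replicate_succ, ih]

lemma exists_word (a b c : C) (a' : Fin k → C) {x : C}
    (hx : x ∈ Subsemigroup.closure (insert (a * b * c) (Set.range a'))) :
    ∃ w : List (Option (Fin k)), w ≠ [] ∧ (w.map (gen a b c a')).prod = x := by
  induction hx using Subsemigroup.closure_induction with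
  | mem z hz =>
    rcases hz with rfl | ⟨i, rfl⟩
    · exact ⟨[none], by simp, by simp [gen]⟩
    · exact ⟨[some i], by simp, by simp [gen]⟩
  | mul z1 z2 _ _ h1 h2 =>
    obtain ⟨w1, hne1, hp1⟩ := h1
    obtain ⟨w2, hne2, hp2⟩ := h2
    exact ⟨w1 ++ w2, by simp [hne1], by simp [hp1, hp2]⟩

lemma exists_words (a b c : C) (a' : Fin k → C) :
    ∀ xs : List C, (∀ x ∈ xs, x ∈ Subsemigroup.closure (insert (a * b * c) (Set.range a'))) →
      ∃ ws : List (List (Option (Fin k))), (∀ w ∈ ws, w ≠ []) ∧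
        ws.map (fun w => (w.map (gen a b c a')).prod) = xs := by
  intro xs
  induction xs with
  | nil => exact fun _ => ⟨[], by simp, rfl⟩
  | cons x xs ih =>
    intro hx
    obtain ⟨ws, hne, hmap⟩ := ih fun z hz => hx z (by simp [hz])
    obtain ⟨w, hwne, hw⟩ := exists_word a b c a' (hx x (by simp))
    refine ⟨w :: ws, ?_, by simp [hw, hmap]⟩
    intro u hu
    rcases List.mem_cons.mp hu with rfl | hu
    · exact hwne
    · exact hne u hu
lemma pipe (ω τ : C →ₗ[ℂ] ℂ) (SA SB : Set C) (hcm : CyclicMonotone ω τ SA SB)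
    (hτ1 : τ 1 = 1) (h1B : (1 : C) ∈ SB)
    (a b c : C) (a' : Fin k → C) (ha : a ∈ SA) (hc : c ∈ SA) (hb : b ∈ SB)
    (ha' : ∀ i, a' i ∈ SA) :
    ∀ (ws : List (List (Option (Fin k)))) (ys : List C), ws.length = ys.length →
      (∀ w ∈ ws, w ≠ []) → (∀ y ∈ ys, y ∈ SB) →
      ω (List.zipWith (fun w y => (w.map (gen a b c a')).prod * y) ws ys).prod
        = ω (((cat ws).map (strp a c a')).prod) * ((cat ws).map (fB τ b)).prod
            * (ys.map τ).prod := by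
  intro ws ys hlen hne hys
  rw [← Lof_prod a b c a' ws ys hlen hne, ← zip_Xw_Yw a b c a' (Lof ws ys),
    hcm _ _ (length_Xw_Yw a c a' b (Lof ws ys)) (mem_Xw ha hc ha' _)
      (mem_Yw hb (Lof ws ys) (Lof_snd_mem h1B ws ys hys)),
    prod_Xw, Lof_map_fst ws ys hlen, map_prod_Yw, Lof_fB τ b hτ1 ws ys hlen hne]
  ring

/-- The core case: all the `x`'s are products of generators. -/
lemma coreC (ω τ : C →ₗ[ℂ] ℂ) (SA SB : Set C) (hcm : CyclicMonotone ω τ SA SB)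
    (hτ1 : τ 1 = 1) (h1B : (1 : C) ∈ SB)
    (a b c : C) (a' : Fin k → C) (ha : a ∈ SA) (hc : c ∈ SA) (hb : b ∈ SB)
    (ha' : ∀ i, a' i ∈ SA) :
    ∀ (xs ys : List C), xs.length = ys.length →
      (∀ x ∈ xs, x ∈ Subsemigroup.closure (insert (a * b * c) (Set.range a'))) →
      (∀ y ∈ ys, y ∈ SB) →
      ω (List.zipWith (· * ·) xs ys).prod = ω xs.prod * (ys.map τ).prod := by
  intro xs ys hlen hxs hys
  obtain ⟨ws, hne, rfl⟩ := exists_words a b c a' xs hxs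
  have hlen' : ws.length = ys.length := by simpa using hlen
  have e1 : List.zipWith (· * ·) (ws.map fun w => (w.map (gen a b c a')).prod) ys
      = List.zipWith (fun w y => (w.map (gen a b c a')).prod * y) ws ys := by
    rw [List.zipWith_map_left]
  have e2 : (ws.map fun w => (w.map (gen a b c a')).prod).prod
      = (List.zipWith (fun w y => (w.map (gen a b c a')).prod * y) ws
          (List.replicate ws.length 1)).prod := by
    rw [zip_ones]
  rw [e1, e2, pipe ω τ SA SB hcm hτ1 h1B a b c a' ha hc hb ha' ws ys hlen' hne hys,
    pipe ω τ SA SB hcm hτ1 h1B a b c a' ha hc hb ha' ws (List.replicate ws.length 1)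
      (by simp) hne (fun y hy => by rw [List.eq_of_mem_replicate hy]; exact h1B)]
  simp [hτ1]
lemma lift (ω τ : C →ₗ[ℂ] ℂ) (SA SB : Set C) (hcm : CyclicMonotone ω τ SA SB)
    (hτ1 : τ 1 = 1) (h1B : (1 : C) ∈ SB)
    (a b c : C) (a' : Fin k → C) (ha : a ∈ SA) (hc : c ∈ SA) (hb : b ∈ SB)
    (ha' : ∀ i, a' i ∈ SA) :
    ∀ (u : List C), ∀ (v ys : List C), (u ++ v).length = ys.length →
      (∀ x ∈ u, x ∈ Submodule.span ℂ
        ((Subsemigroup.closure (insert (a * b * c) (Set.range a')) : Subsemigroup C) : Set C)) →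
      (∀ x ∈ v, x ∈ Subsemigroup.closure (insert (a * b * c) (Set.range a'))) →
      (∀ y ∈ ys, y ∈ SB) →
      ω (List.zipWith (· * ·) (u ++ v) ys).prod = ω (u ++ v).prod * (ys.map τ).prod := by
  intro u
  induction u using List.reverseRecOn with
  | nil =>
    intro v ys hlen hu hv hys
    simpa using coreC ω τ SA SB hcm hτ1 h1B a b c a' ha hc hb ha' v ys (by simpa using hlen)
      hv hys
  | append_singleton u' x IH =>
    intro v ys hlen hu hv hys
    have hx : x ∈ Submodule.span ℂ
        ((Subsemigroup.closure (insert (a * b * c) (Set.range a')) : Subsemigroup C) : Set C) :=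
      hu x (by simp)
    have hu' : ∀ z ∈ u', z ∈ Submodule.span ℂ
        ((Subsemigroup.closure (insert (a * b * c) (Set.range a')) : Subsemigroup C) : Set C) :=
      fun z hz => hu z (by simp [hz])
    have hxs : (u' ++ [x]) ++ v = u' ++ (x :: v) := by simp
    rw [hxs] at hlen ⊢
    have hlenys : ys.length = u'.length + (v.length + 1) := by
      simpa using hlen.symm
    obtain ⟨y, ys2, hys2⟩ : ∃ y ys2, ys.drop u'.length = y :: ys2 := by
      cases h : ys.drop u'.length with
      | nil =>
        have := congrArg List.length h
        simp [hlenys] at this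
      | cons y ys2 => exact ⟨y, ys2, rfl⟩
    have hysplit : ys = ys.take u'.length ++ y :: ys2 := by
      rw [← hys2]; exact (List.take_append_drop _ _).symm
    set ys1 := ys.take u'.length with hys1
    have hlen1 : u'.length = ys1.length := by
      simp [hys1, hlenys]
    have hlen2 : ys2.length = v.length := by
      have := congrArg List.length hys2
      simp [hlenys] at this
      omega
    have hys1mem : ∀ z ∈ ys1, z ∈ SB := fun z hz => hys z (List.mem_of_mem_take hz)
    have hymem : y ∈ SB := hys y (by rw [hysplit]; simp)
    have hys2mem : ∀ z ∈ ys2, z ∈ SB := fun z hz => hys z (by rw [hysplit]; simp [hz])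
    rw [hysplit]
    have zsplit : ∀ t : C,
        List.zipWith (· * ·) (u' ++ t :: v) (ys1 ++ y :: ys2)
          = List.zipWith (· * ·) u' ys1 ++ (t * y) :: List.zipWith (· * ·) v ys2 := by
      intro t
      rw [List.zipWith_append hlen1]
      rfl
    have psplit : ∀ t : C, (u' ++ t :: v).prod = u'.prod * (t * v.prod) := by
      intro t; simp
    rw [zsplit x, psplit x, List.prod_append, List.prod_cons]
    rw [show (x * y) * (List.zipWith (· * ·) v ys2).prod
        = x * (y * (List.zipWith (· * ·) v ys2).prod) from mul_assoc _ _ _]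
    clear hlen hu hxs
    induction hx using Submodule.span_induction with
    | mem z hz =>
      have hlen' : (u' ++ z :: v).length = (ys1 ++ y :: ys2).length := by
        simp [← hlen1, hlen2]
      have := IH (z :: v) (ys1 ++ y :: ys2) hlen' hu'
        (by
          intro t ht
          rcases List.mem_cons.mp ht with rfl | ht
          · exact hz
          · exact hv t ht)
        (by
          intro t ht
          rcases List.mem_append.mp ht with ht | ht
          · exact hys1mem t ht
          · rcases List.mem_cons.mp ht with rfl | ht
            · exact hymem
            · exact hys2mem t ht)
      rw [zsplit z, psplit z, List.prod_append, List.prod_cons] at this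
      simpa [mul_assoc] using this
    | zero => simp
    | add s t hs ht ihs iht =>
      simp only [add_mul, mul_add, map_add]
      rw [ihs, iht]
    | smul r t ht iht =>
      simp only [smul_mul_assoc, mul_smul_comm, map_smul, smul_eq_mul]
      rw [iht]
      try ring
lemma zip_ones' : ∀ l : List C, List.zipWith (· * ·) l (List.replicate l.length 1) = l := by
  intro l
  induction l with
  | nil => rfl
  | cons x l ih => simp [List.replicate_succ, ih]

end CMaux

theorem stmt_8 {C : Type*} [Ring C] [Algebra ℂ C] [StarRing C] [StarModule ℂ C]
    (ω τ : C →ₗ[ℂ] ℂ)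
    (hτ1 : τ 1 = 1) (hτtr : ∀ x y : C, τ (x * y) = τ (y * x))
    (hωtr : ∀ x y : C, ω (x * y) = ω (y * x))
    (SA SB : Set C) (h1B : (1 : C) ∈ SB)
    (hcm : CyclicMonotone ω τ SA SB)
    (a c : C) (b : C) (ha : a ∈ SA) (hc : c ∈ SA) (hb : b ∈ SB)
    (k : ℕ) (a' : Fin k → C) (ha' : ∀ i, a' i ∈ SA) :
    CyclicMonotone ω τ
      (NonUnitalAlgebra.adjoin ℂ (insert (a * b * c) (Set.range a')) : Set C) SB ∧
    ω ((a * b * c) * (List.ofFn fun i => a' i).prod) =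
      τ b * ω (a * c * (List.ofFn fun i => a' i).prod) := by
  constructor
  · intro xs ys hlen hxs hys
    have hspan : ∀ x ∈ xs, x ∈ Submodule.span ℂ
        ((Subsemigroup.closure (insert (a * b * c) (Set.range a')) : Subsemigroup C) : Set C) := by
      intro x hx
      have hx' : x ∈ (NonUnitalAlgebra.adjoin ℂ (insert (a * b * c) (Set.range a'))).toSubmodule :=
        hxs x hx
      rwa [NonUnitalAlgebra.adjoin_eq_span] at hx'
    have := CMaux.lift ω τ SA SB hcm hτ1 h1B a b c a' ha hc hb ha' xs [] ys
      (by simpa using hlen) hspan (by simp) hys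
    simpa using this
  · have hxs : ∀ x ∈ a :: c :: List.ofFn a', x ∈ SA := by
      intro x hx
      rcases List.mem_cons.mp hx with rfl | hx
      · exact ha
      rcases List.mem_cons.mp hx with rfl | hx
      · exact hc
      obtain ⟨i, rfl⟩ := List.mem_ofFn.mp hx
      exact ha' i
    have hys : ∀ y ∈ b :: (1 : C) :: List.replicate k 1, y ∈ SB := by
      intro y hy
      rcases List.mem_cons.mp hy with rfl | hy
      · exact hb
      rcases List.mem_cons.mp hy with rfl | hy
      · exact h1B
      · rw [List.eq_of_mem_replicate hy]; exact h1B
    have hlen : (a :: c :: List.ofFn a').length = (b :: (1 : C) :: List.replicate k 1).length := by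
      simp
    have happ := hcm _ _ hlen hxs hys
    have hzip : List.zipWith (· * ·) (List.ofFn a') (List.replicate k 1) = List.ofFn a' := by
      have := CMaux.zip_ones' (List.ofFn a')
      simpa using this
    simp only [List.zipWith_cons_cons, List.prod_cons, hzip, mul_one, List.map_cons,
      List.map_replicate, hτ1, List.prod_replicate, one_pow] at happ
    have e1 : a * b * c * (List.ofFn fun i => a' i).prod = a * b * (c * (List.ofFn a').prod) := by
      rw [mul_assoc]
    have e2 : a * c * (List.ofFn fun i => a' i).prod = a * (c * (List.ofFn a').prod) := by
      rw [mul_assoc]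
    rw [e1, e2, happ]
    ring
end

section
/- Let (λ_i)_{i≥1} and (μ_i)_{i≥1} be absolutely summable sequences of real numbers (∑|λ_i| < ∞, ∑|μ_i| < ∞) such that ∑_i λ_iⁿ = ∑_i μ_iⁿ for every integer n ≥ 1. Then the multisets of nonzero terms of (λ_i) and (μ_i) coincide. -/
/-!
Group the terms of both sequences by value: the n-th power sum of `l` is `∑_c m_l(c) cⁿ`, with
`m_l(c)` the multiplicity of the value `c`, so `a = m_l - m_μ` is an integer-valued function with
`∑_c |a(c) c| < ∞` all of whose moments `∑_c a(c) cⁿ` (`n ≥ 1`) vanish. Since `|a(c)| ≥ 1` on its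
support, only finitely many `c` with `a(c) ≠ 0` have `|c| ≥ ε`; so if `a` does not vanish off `0`
there is a largest such `|c| = r`. Dividing the `n`-th moment by `rⁿ` and letting `n → ∞` along
odd and along even `n` kills every term with `|c| < r` and leaves `a(r) ∓ a(-r) = 0`, hence
`a(±r) = 0`, a contradiction.
-/

open Filter Topology

lemma Summable.pow_of_abs {ι : Type*} {f : ι → ℝ} (hf : Summable fun i => |f i|) {n : ℕ}
    (hn : n ≠ 0) : Summable fun i => f i ^ n := by
  refine hf.of_norm_bounded_eventually ?_
  filter_upwards [hf.tendsto_cofinite_zero.eventually_lt_const one_pos] with i hi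
  rw [Real.norm_eq_abs, abs_pow]
  exact pow_le_of_le_one (abs_nonneg _) hi.le hn

lemma hasSum_natCard_fiber_mul {ι : Type*} (f : ι → ℝ) {g : ℝ → ℝ} (hg : Summable (g ∘ f)) :
    HasSum (fun c => (Nat.card {i | f i = c} : ℝ) * g c) (∑' i, g (f i)) := by
  have hfiber (c : ℝ) : ∑' i : f ⁻¹' {c}, (g ∘ f) i = (Nat.card {i | f i = c} : ℝ) * g c := by
    calc ∑' i : f ⁻¹' {c}, (g ∘ f) i = ∑' _ : f ⁻¹' {c}, g c :=
          tsum_congr fun i => by rw [Function.comp_apply, i.2]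
      -- valid also for an infinite fiber: then `Nat.card = 0`, and the `tsum` is `0` too
      _ = (Nat.card {i | f i = c} : ℝ) * g c := by rw [tsum_const, nsmul_eq_mul]; rfl
  have h := hg.hasSum.tsum_fiberwise f
  simp only [hfiber] at h
  exact h

lemma finite_setOf_ne_zero_le_abs {a : ℝ → ℤ} (ha : Summable fun c => (a c : ℝ) * c) {ε : ℝ}
    (hε : 0 < ε) : {c | a c ≠ 0 ∧ ε ≤ |c|}.Finite := by
  refine (eventually_cofinite.1 (ha.abs.tendsto_cofinite_zero.eventually_lt_const hε)).subset ?_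
  rintro c ⟨hac, hc⟩
  have h1 : (1 : ℝ) ≤ |(a c : ℝ)| := by exact_mod_cast Int.one_le_abs hac
  simp only [Set.mem_ofPred_eq, not_lt, abs_mul]
  nlinarith [abs_nonneg c]

lemma tendsto_pow_two_mul_add {x : ℝ} (hx : |x| ≤ 1) (m : ℕ) :
    Tendsto (fun n => x ^ (2 * n + m)) atTop (𝓝 (if |x| = 1 then x ^ m else 0)) := by
  rcases hx.lt_or_eq with hlt | heq
  · rw [if_neg hlt.ne]
    exact (tendsto_pow_atTop_nhds_zero_of_abs_lt_one hlt).comp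
      (tendsto_atTop_atTop.2 fun b => ⟨b, fun n hn => by omega⟩)
  · have hsq : x ^ 2 = 1 := by rw [← sq_abs, heq, one_pow]
    simp only [if_pos heq, pow_add, pow_mul, hsq, one_pow, one_mul]
    exact tendsto_const_nhds

lemma tendsto_tsum_mul_div_pow {a : ℝ → ℝ} (ha : Summable fun c => a c * c) {r : ℝ} (hr : 0 < r)
    (hvanish : ∀ c, r < |c| → a c = 0) {m : ℕ} (hm : m ≠ 0) :
    Tendsto (fun n => ∑' c, a c * (c / r) ^ (2 * n + m)) atTop
      (𝓝 (a r + a (-r) * (-1) ^ m)) := by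
  have habs_div (c : ℝ) : |c / r| = |c| / r := by rw [abs_div, abs_of_pos hr]
  have habs_div_le (c : ℝ) (hc : ¬r < |c|) : |c / r| ≤ 1 := by
    rw [habs_div, div_le_one hr]; exact not_lt.1 hc
  have hlim : ∑' c, a c * (if |c / r| = 1 then (c / r) ^ m else 0) =
      a r + a (-r) * (-1) ^ m := by
    rw [tsum_eq_sum (s := {r, -r}), Finset.sum_pair (by linarith : r ≠ -r)]
    · simp [hr.ne']
    · intro c hc
      have hc_ne : |c / r| ≠ 1 := by
        rw [habs_div, Ne, div_eq_one_iff_eq hr.ne', abs_eq hr.le]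
        simpa using hc
      rw [if_neg hc_ne, mul_zero]
  rw [← hlim]
  refine tendsto_tsum_of_dominated_convergence (bound := fun c => |a c * c| / r)
    (ha.abs.div_const r) (fun c => ?_) (Eventually.of_forall fun n c => ?_) <;>
    by_cases hc : r < |c|
  · simp only [hvanish c hc, zero_mul]
    exact tendsto_const_nhds
  · exact (tendsto_pow_two_mul_add (habs_div_le c hc) m).const_mul (a c)
  · simp [hvanish c hc]
  · rw [Real.norm_eq_abs, abs_mul, abs_pow, abs_mul, mul_div_assoc, ← habs_div]
    exact mul_le_mul_of_nonneg_left (pow_le_of_le_one (abs_nonneg _) (habs_div_le c hc)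
      (by omega)) (abs_nonneg _)

theorem eq_zero_of_tsum_mul_pow_eq_zero {a : ℝ → ℤ} (ha : Summable fun c => (a c : ℝ) * c)
    (hmom : ∀ n, 1 ≤ n → ∑' c, (a c : ℝ) * c ^ n = 0) {c : ℝ} (hc : c ≠ 0) : a c = 0 := by
  by_contra hac
  obtain ⟨c₀, ⟨hac₀, hc₀⟩, hmax⟩ := Set.exists_max_image _ (fun c => |c|)
    (finite_setOf_ne_zero_le_abs ha (abs_pos.2 hc)) ⟨c, hac, le_rfl⟩
  set r := |c₀| with hr_def
  have hr : 0 < r := (abs_pos.2 hc).trans_le hc₀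
  have hvanish : ∀ c', r < |c'| → (a c' : ℝ) = 0 := fun c' hc' => by
    by_contra h
    exact (hmax c' ⟨by exact_mod_cast h, hc₀.trans hc'.le⟩).not_gt hc'
  have hzero : ∀ m ≠ 0, (a r : ℝ) + a (-r) * (-1) ^ m = 0 := fun m hm =>
    tendsto_nhds_unique (tendsto_tsum_mul_div_pow ha hr hvanish hm) <|
      tendsto_const_nhds.congr fun n => by
        simp_rw [div_pow, ← mul_div_assoc]
        rw [tsum_div_const, hmom _ (by omega), zero_div]
  have hodd := hzero 1 one_ne_zero
  have heven := hzero 2 two_ne_zero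
  norm_num at hodd heven
  have har : (a r : ℝ) = 0 := by linarith
  have har_neg : (a (-r) : ℝ) = 0 := by linarith
  rcases (abs_eq hr.le).1 hr_def.symm with h | h <;> rw [h] at hac₀
  · exact hac₀ (by exact_mod_cast har)
  · exact hac₀ (by exact_mod_cast har_neg)

theorem stmt_16 (l μ : ℕ → ℝ)
    (hl : Summable fun i => |l i|) (hμ : Summable fun i => |μ i|)
    (h : ∀ n : ℕ, 1 ≤ n → ∑' i, l i ^ n = ∑' i, μ i ^ n) :
    ∀ c : ℝ, c ≠ 0 → Nat.card {i | l i = c} = Nat.card {i | μ i = c} := by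
  intro c hc
  set a : ℝ → ℤ := fun c => Nat.card {i | l i = c} - Nat.card {i | μ i = c}
  have hasSum_pow : ∀ n, 1 ≤ n →
      HasSum (fun c => (a c : ℝ) * c ^ n) (∑' i, l i ^ n - ∑' i, μ i ^ n) := fun n hn => by
    simpa [a, sub_mul] using
      (hasSum_natCard_fiber_mul l (g := (· ^ n)) (hl.pow_of_abs (by omega))).sub
        (hasSum_natCard_fiber_mul μ (g := (· ^ n)) (hμ.pow_of_abs (by omega)))
  have ha : a c = 0 := eq_zero_of_tsum_mul_pow_eq_zero
    ((hasSum_pow 1 le_rfl).summable.congr fun c => by rw [pow_one])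
    (fun n hn => by rw [(hasSum_pow n hn).tsum_eq, h n hn, sub_self]) hc
  exact_mod_cast sub_eq_zero.1 ha
end
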